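/- Linear-time-step universal constructor: let S_I ⊆ S_F be connected shapes. Then there exist a natural number m ≤ 4·|S_F| and a chain of connected shapes T_0 = S_I, T_1, …, T_m = S_F such that for every i < m there is a direction d ∈ {(1,0), (−1,0), (0,1), (0,−1)} with T_i ⊆ T_{i+1} ⊆ T_i ∪ {p + d : p ∈ T_i}; i.e., in each time-step a fixed direction is chosen and every newly added node is generated at an empty position adjacent, in that direction, to an existing node (each existing node generating at most one new node). -/

import Mathlib

/-- Minimum first coordinate of a shape (0 for the empty set). -/
def xmin (S : Finset (ℤ × ℤ)) : ℤ := WithTop.untopD 0 (S.image Prod.fst).min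

/-- Minimum second coordinate of a shape (0 for the empty set). -/
def ymin (S : Finset (ℤ × ℤ)) : ℤ := WithTop.untopD 0 (S.image Prod.snd).min

/-- East full doubling. -/
def DE (S : Finset (ℤ × ℤ)) : Finset (ℤ × ℤ) :=
  S.image (fun p => (2 * p.1 - xmin S, p.2)) ∪
    S.image (fun p => (2 * p.1 - xmin S + 1, p.2))

/-- North full doubling. -/
def DN (S : Finset (ℤ × ℤ)) : Finset (ℤ × ℤ) :=
  S.image (fun p => (p.1, 2 * p.2 - ymin S)) ∪
    S.image (fun p => (p.1, 2 * p.2 - ymin S + 1))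

/-- Apply a sequence of full doubling operations (`true` = east, `false` = north),
in order (head of the list first). -/
def applySeq (σ : List Bool) (S : Finset (ℤ × ℤ)) : Finset (ℤ × ℤ) :=
  σ.foldl (fun T b => if b then DE T else DN T) S

/-- The (p,q)-rectangle around an integer point. -/
noncomputable def Rec2 (u : ℤ × ℤ) (p q : ℕ) : Finset (ℤ × ℤ) :=
  Finset.Icc u.1 (u.1 + (p : ℤ) - 1) ×ˢ Finset.Icc u.2 (u.2 + (q : ℤ) - 1)

/-- The reconfiguration function `F_{l,k}`. -/
noncomputable def F (l k : ℕ) (S : Finset (ℤ × ℤ)) : Finset (ℤ × ℤ) :=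
  S.biUnion fun p =>
    Rec2 (p.1 + ((2 : ℤ) ^ l - 1) * (p.1 - xmin S),
          p.2 + ((2 : ℤ) ^ k - 1) * (p.2 - ymin S)) (2 ^ l) (2 ^ k)

/-- Two grid points are adjacent if they are at orthogonal distance 1. -/
def Adj (u v : ℤ × ℤ) : Prop := (u.1 - v.1).natAbs + (u.2 - v.2).natAbs = 1

/-- A shape is connected if any two of its points are joined by a path of
adjacent points inside the shape. -/
def ShapeConnected (S : Finset (ℤ × ℤ)) : Prop :=
  ∀ u ∈ S, ∀ v ∈ S,
    Relation.ReflTransGen (fun a b => a ∈ S ∧ b ∈ S ∧ Adj a b) u v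

/-- `wD D x` is the number of elements of `D` strictly west of `x`. -/
def wD (D : Finset ℤ) (x : ℤ) : ℕ := (D.filter (· < x)).card

/-- East RC doubling of `S` with doubled column set `D`. -/
def RCE (S : Finset (ℤ × ℤ)) (D : Finset ℤ) : Finset (ℤ × ℤ) :=
  S.image (fun p => (p.1 + (wD D p.1 : ℤ), p.2)) ∪
    (S.filter fun p => p.1 ∈ D).image fun p => (p.1 + (wD D p.1 : ℤ) + 1, p.2)

/-- North RC doubling of `S` with doubled row set `D`. -/
def RCN (S : Finset (ℤ × ℤ)) (D : Finset ℤ) : Finset (ℤ × ℤ) :=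
  S.image (fun p => (p.1, p.2 + (wD D p.2 : ℤ))) ∪
    (S.filter fun p => p.2 ∈ D).image fun p => (p.1, p.2 + (wD D p.2 : ℤ) + 1)

/-- `D` is an admissible doubled column set for `S`. -/
def eastAdmissible (S : Finset (ℤ × ℤ)) (D : Finset ℤ) : Prop :=
  D.Nonempty ∧ ∀ d ∈ D, ∃ y, (d, y) ∈ S

/-- `D` is an admissible doubled row set for `S`. -/
def northAdmissible (S : Finset (ℤ × ℤ)) (D : Finset ℤ) : Prop :=
  D.Nonempty ∧ ∀ d ∈ D, ∃ x, (x, d) ∈ S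

/-- One east or north RC doubling step. -/
def RCStep (S T : Finset (ℤ × ℤ)) : Prop :=
  ∃ D : Finset ℤ,
    (eastAdmissible S D ∧ T = RCE S D) ∨ (northAdmissible S D ∧ T = RCN S D)

/-- One single column or single row doubling step (an RC step with `|D| = 1`). -/
def SingleStep (S T : Finset (ℤ × ℤ)) : Prop :=
  ∃ D : Finset ℤ, D.card = 1 ∧
    ((eastAdmissible S D ∧ T = RCE S D) ∨ (northAdmissible S D ∧ T = RCN S D))

/-- Translate a shape by a vector. -/
def translateSh (v : ℤ × ℤ) (S : Finset (ℤ × ℤ)) : Finset (ℤ × ℤ) :=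
  S.image fun p => (p.1 + v.1, p.2 + v.2)

/-- Single east column doubling at column `d`. -/
def oE (d : ℤ) (T : Finset (ℤ × ℤ)) : Finset (ℤ × ℤ) :=
  (T.filter fun p => p.1 ≤ d) ∪ (T.filter fun p => d ≤ p.1).image fun p => (p.1 + 1, p.2)

/-- The column of `S` at `x`. -/
def colS (S : Finset (ℤ × ℤ)) (x : ℤ) : Finset ℤ := (S.filter fun p => p.1 = x).image Prod.snd

/-- The row of `S` at `y`. -/
def rowS (S : Finset (ℤ × ℤ)) (y : ℤ) : Finset ℤ := (S.filter fun p => p.2 = y).image Prod.fst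

/-- `phiC S x` counts the column changes of `S` in the interval `(xmin S, x]`. -/
noncomputable def phiC (S : Finset (ℤ × ℤ)) (x : ℤ) : ℕ :=
  ((Finset.Icc (xmin S + 1) x).filter fun x' => colS S x' ≠ colS S (x' - 1)).card

/-- `phiR S y` counts the row changes of `S` in the interval `(ymin S, y]`. -/
noncomputable def phiR (S : Finset (ℤ × ℤ)) (y : ℤ) : ℕ :=
  ((Finset.Icc (ymin S + 1) y).filter fun y' => rowS S y' ≠ rowS S (y' - 1)).card

/-- Column compression of a shape. -/
noncomputable def KC (S : Finset (ℤ × ℤ)) : Finset (ℤ × ℤ) := S.image fun p => ((phiC S p.1 : ℤ), p.2)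

/-- Row compression of a shape. -/
noncomputable def KR (S : Finset (ℤ × ℤ)) : Finset (ℤ × ℤ) := S.image fun p => (p.1, (phiR S p.2 : ℤ))

/-- The baseline shape of `S`. -/
noncomputable def Baseline (S : Finset (ℤ × ℤ)) : Finset (ℤ × ℤ) := KR (KC S)

/-- Number of distinct consecutive columns of `S`. -/
noncomputable def mC (S : Finset (ℤ × ℤ)) : ℕ := (S.image Prod.fst).sup (phiC S) + 1

/-- Number of distinct consecutive rows of `S`. -/
noncomputable def mR (S : Finset (ℤ × ℤ)) : ℕ := (S.image Prod.snd).sup (phiR S) + 1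

/-- Consecutive multiplicity of the `i`-th distinct column of `S`. -/
noncomputable def MC (S : Finset (ℤ × ℤ)) (i : ℕ) : ℕ := ((S.image Prod.fst).filter fun x => phiC S x = i).card

/-- Consecutive multiplicity of the `i`-th distinct row of `S`. -/
noncomputable def MR (S : Finset (ℤ × ℤ)) (i : ℕ) : ℕ := ((S.image Prod.snd).filter fun y => phiR S y = i).card

/-- The four unit directions. -/
def dirs : Finset (ℤ × ℤ) := {(1, 0), (-1, 0), (0, 1), (0, -1)}

/-- One node-addition growth step: a direction `d` is fixed and every new node is
generated at a position `p + d` for an existing node `p`. -/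
def AddStep (S T : Finset (ℤ × ℤ)) : Prop :=
  ∃ d ∈ dirs, S ⊆ T ∧ T ⊆ S ∪ S.image (fun p => (p.1 + d.1, p.2 + d.2))


/-!
Grow the shape one node at a time. As long as `S_I ⊊ S_F`, a path in `S_F` from a node of the
current shape to a missing node leaves the current shape somewhere, so some missing node `p` is
adjacent to a present node `q`; adding `p` alone is a growth step in direction `p - q` and keeps
the shape connected. This takes `|S_F \ S_I| ≤ |S_F|` steps.
-/

lemma Adj.symm {u v : ℤ × ℤ} (h : Adj u v) : Adj v u := by
  unfold Adj at *
  omega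

lemma Relation.ReflTransGen.exists_rel_of_mem_of_not_mem {α : Type*} {r : α → α → Prop}
    {s : Set α} {a b : α} (h : Relation.ReflTransGen r a b) (ha : a ∈ s) (hb : b ∉ s) :
    ∃ x ∈ s, ∃ y ∉ s, r x y := by
  induction h with
  | refl => exact absurd ha hb
  | @tail c d _ hcd ih =>
    by_cases hc : c ∈ s
    · exact ⟨c, hc, d, hb, hcd⟩
    · exact ih hc

lemma ShapeConnected.exists_adj_mem_sdiff {S F : Finset (ℤ × ℤ)} (hF : ShapeConnected F)
    (hSF : S ⊆ F) (hS : S.Nonempty) (hFS : (F \ S).Nonempty) :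
    ∃ q ∈ S, ∃ p ∈ F \ S, Adj q p := by
  obtain ⟨u, hu⟩ := hS
  obtain ⟨v, hv⟩ := hFS
  obtain ⟨q, hq, p, hp, _, hpF, hqp⟩ :=
    (hF u (hSF hu) v (Finset.mem_sdiff.1 hv).1).exists_rel_of_mem_of_not_mem
      (s := (S : Set (ℤ × ℤ))) hu (Finset.mem_sdiff.1 hv).2
  exact ⟨q, hq, p, Finset.mem_sdiff.2 ⟨hpF, hp⟩, hqp⟩

lemma ShapeConnected.insert_of_adj {S : Finset (ℤ × ℤ)} (hS : ShapeConnected S) {p q : ℤ × ℤ}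
    (hq : q ∈ S) (hqp : Adj q p) : ShapeConnected (insert p S) := by
  set R : ℤ × ℤ → ℤ × ℤ → Prop := fun a b => a ∈ insert p S ∧ b ∈ insert p S ∧ Adj a b
  have hmono : ∀ u ∈ S, ∀ v ∈ S, Relation.ReflTransGen R u v := fun u hu v hv =>
    Relation.ReflTransGen.mono (fun a b ⟨ha, hb, hab⟩ =>
      ⟨Finset.mem_insert_of_mem ha, Finset.mem_insert_of_mem hb, hab⟩) u v (hS u hu v hv)
  have hp : p ∈ insert p S := Finset.mem_insert_self p S
  have hq' : q ∈ insert p S := Finset.mem_insert_of_mem hq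
  have to_q : ∀ u ∈ insert p S, Relation.ReflTransGen R u q := by
    intro u hu
    rcases Finset.mem_insert.1 hu with rfl | hu
    · exact .single ⟨hp, hq', hqp.symm⟩
    · exact hmono u hu q hq
  have from_q : ∀ v ∈ insert p S, Relation.ReflTransGen R q v := by
    intro v hv
    rcases Finset.mem_insert.1 hv with rfl | hv
    · exact .single ⟨hq', hp, hqp⟩
    · exact hmono q hq v hv
  exact fun u hu v hv => (to_q u hu).trans (from_q v hv)

lemma addStep_insert {S : Finset (ℤ × ℤ)} {p q : ℤ × ℤ} (hq : q ∈ S) (hqp : Adj q p) :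
    AddStep S (insert p S) := by
  refine ⟨(p.1 - q.1, p.2 - q.2), ?_, Finset.subset_insert p S, ?_⟩
  · unfold Adj at hqp
    have : (p.1 - q.1 = 1 ∧ p.2 - q.2 = 0) ∨ (p.1 - q.1 = -1 ∧ p.2 - q.2 = 0) ∨
        (p.1 - q.1 = 0 ∧ p.2 - q.2 = 1) ∨ (p.1 - q.1 = 0 ∧ p.2 - q.2 = -1) := by omega
    rcases this with ⟨h1, h2⟩ | ⟨h1, h2⟩ | ⟨h1, h2⟩ | ⟨h1, h2⟩ <;> simp [dirs, h1, h2]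
  · refine Finset.insert_subset (Finset.mem_union_right _ (Finset.mem_image.2 ⟨q, hq, ?_⟩))
      Finset.subset_union_left
    simp

def IsGrowthChain (T : ℕ → Finset (ℤ × ℤ)) (m : ℕ) : Prop :=
  (∀ i ≤ m, (T i).Nonempty ∧ ShapeConnected (T i)) ∧ ∀ i < m, AddStep (T i) (T (i + 1))

lemma IsGrowthChain.cons {T : ℕ → Finset (ℤ × ℤ)} {m : ℕ} (hT : IsGrowthChain T m)
    {S : Finset (ℤ × ℤ)} (hS : S.Nonempty) (hcS : ShapeConnected S) (hstep : AddStep S (T 0)) :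
    IsGrowthChain (fun | 0 => S | i + 1 => T i) (m + 1) := by
  refine ⟨fun i hi => ?_, fun i hi => ?_⟩
  · cases i with
    | zero => exact ⟨hS, hcS⟩
    | succ i => exact hT.1 i (by omega)
  · cases i with
    | zero => exact hstep
    | succ i => exact hT.2 i (by omega)

lemma ShapeConnected.exists_isGrowthChain {F : Finset (ℤ × ℤ)} (hF : ShapeConnected F)
    {S : Finset (ℤ × ℤ)} (hSF : S ⊆ F) (hS : S.Nonempty) (hcS : ShapeConnected S) :
    ∃ T : ℕ → Finset (ℤ × ℤ), T 0 = S ∧ T (F \ S).card = F ∧ IsGrowthChain T (F \ S).card := by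
  induction hn : (F \ S).card generalizing S with
  | zero =>
    have hFS : F = S := (Finset.sdiff_eq_empty_iff_subset.1 (Finset.card_eq_zero.1 hn)).antisymm hSF
    exact ⟨fun _ => S, rfl, hFS.symm,
      fun _ _ => ⟨hS, hcS⟩, fun i hi => absurd hi (Nat.not_lt_zero i)⟩
  | succ n ih =>
    obtain ⟨q, hq, p, hp, hqp⟩ :=
      hF.exists_adj_mem_sdiff hSF hS (Finset.card_pos.1 (by omega))
    have hcard : (F \ insert p S).card = n := by
      rw [Finset.sdiff_insert, Finset.card_erase_of_mem hp, hn, Nat.add_sub_cancel]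
    obtain ⟨T, hT0, hTn, hT⟩ := ih (Finset.insert_subset (Finset.mem_sdiff.1 hp).1 hSF)
      (Finset.insert_nonempty p S) (hcS.insert_of_adj hq hqp) hcard
    exact ⟨_, rfl, hTn, hT.cons hS hcS (hT0 ▸ addStep_insert hq hqp)⟩

theorem linear_universal_constructor_general (S_I S_F : Finset (ℤ × ℤ))
    (hI : S_I.Nonempty) (hsub : S_I ⊆ S_F)
    (hcI : ShapeConnected S_I) (hcF : ShapeConnected S_F) :
    ∃ m ≤ 4 * S_F.card, ∃ T : ℕ → Finset (ℤ × ℤ),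
      T 0 = S_I ∧ T m = S_F ∧
        (∀ i ≤ m, (T i).Nonempty ∧ ShapeConnected (T i)) ∧
        (∀ i < m, AddStep (T i) (T (i + 1))) := by
  obtain ⟨T, hT0, hTm, hconn, hstep⟩ := hcF.exists_isGrowthChain hsub hI hcI
  have hm : (S_F \ S_I).card ≤ 4 * S_F.card :=
    (Finset.card_le_card Finset.sdiff_subset).trans (Nat.le_mul_of_pos_left _ (by norm_num))
  exact ⟨_, hm, T, hT0, hTm, hconn, hstep⟩

/-- linear-time-step universal constructor: for connected shapes
`S_I ⊆ S_F`, there is a chain of at most `4|S_F|` node-addition growth steps from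
`S_I` to `S_F` through connected shapes. -/
theorem linear_universal_constructor (S_I S_F : Finset (ℤ × ℤ))
    (hI : S_I.Nonempty) (hF : S_F.Nonempty) (hsub : S_I ⊆ S_F)
    (hcI : ShapeConnected S_I) (hcF : ShapeConnected S_F) :
    ∃ m ≤ 4 * S_F.card, ∃ T : ℕ → Finset (ℤ × ℤ),
      T 0 = S_I ∧ T m = S_F ∧
        (∀ i ≤ m, (T i).Nonempty ∧ ShapeConnected (T i)) ∧
        (∀ i < m, AddStep (T i) (T (i + 1))) :=
  linear_universal_constructor_general S_I S_F hI hsub hcI hcF
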